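/- arXiv:0802.0832 — 7 statements merged into one kernel-verified Lean document; each statement's English description precedes it below -/
import Mathlib

section
/- For every natural number m ≥ 1 and n = m², there exists a family (B_i)_{i ∈ Fin n} of finite subsets of Fin n such that card(B_i) ≤ 2m for every i, and B_i ∩ B_j ≠ ∅ for every pair of indices i, j. -/
/-- Distributed match-making: for `n = m²` nodes there is a family of clerk sets
`B i ⊆ Fin n`, each of size at most `2m`, any two of which intersect. -/
theorem distributed_match_making (m : ℕ) (hm : 1 ≤ m) (n : ℕ) (hn : n = m ^ 2) :
    ∃ B : Fin n → Finset (Fin n),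
      (∀ i, (B i).card ≤ 2 * m) ∧ ∀ i j, (B i ∩ B j).Nonempty := by
  subst hn
  have hm0 : 0 < m := hm
  have hdiv : ∀ k : Fin (m ^ 2), (k : ℕ) / m < m := by
    intro k
    rw [Nat.div_lt_iff_lt_mul hm0, ← pow_two]
    exact k.isLt
  refine ⟨fun i => Finset.univ.filter (fun k => (k : ℕ) / m = (i : ℕ) / m) ∪
      Finset.univ.filter (fun k => (k : ℕ) % m = (i : ℕ) % m), ?_, ?_⟩
  · intro i
    have h1 : (Finset.univ.filter (fun k : Fin (m ^ 2) => (k : ℕ) / m = (i : ℕ) / m)).card ≤ m := by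
      have := Finset.card_le_card_of_injOn (f := fun k : Fin (m ^ 2) => (k : ℕ) % m)
        (s := Finset.univ.filter (fun k : Fin (m ^ 2) => (k : ℕ) / m = (i : ℕ) / m))
        (t := Finset.range m) ?_ ?_
      · simpa using this
      · intro k _; exact Finset.mem_range.mpr (Nat.mod_lt _ hm0)
      · intro a ha b hb hab
        simp only [Finset.coe_filter, Finset.mem_univ, true_and, Set.mem_setOf_eq] at ha hb
        simp only [] at hab
        refine Fin.ext ?_
        calc (a : ℕ) = m * ((a : ℕ) / m) + (a : ℕ) % m := (Nat.div_add_mod _ _).symm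
          _ = m * ((b : ℕ) / m) + (b : ℕ) % m := by rw [ha, hb, hab]
          _ = (b : ℕ) := Nat.div_add_mod _ _
    have h2 : (Finset.univ.filter (fun k : Fin (m ^ 2) => (k : ℕ) % m = (i : ℕ) % m)).card ≤ m := by
      have := Finset.card_le_card_of_injOn (f := fun k : Fin (m ^ 2) => (k : ℕ) / m)
        (s := Finset.univ.filter (fun k : Fin (m ^ 2) => (k : ℕ) % m = (i : ℕ) % m))
        (t := Finset.range m) ?_ ?_
      · simpa using this
      · intro k _; exact Finset.mem_range.mpr (hdiv k)
      · intro a ha b hb hab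
        simp only [Finset.coe_filter, Finset.mem_univ, true_and, Set.mem_setOf_eq] at ha hb
        simp only [] at hab
        refine Fin.ext ?_
        calc (a : ℕ) = m * ((a : ℕ) / m) + (a : ℕ) % m := (Nat.div_add_mod _ _).symm
          _ = m * ((b : ℕ) / m) + (b : ℕ) % m := by rw [ha, hb, hab]
          _ = (b : ℕ) := Nat.div_add_mod _ _
    calc _ ≤ _ + _ := Finset.card_union_le _ _
      _ ≤ 2 * m := by omega
  · intro i j
    have him : (i : ℕ) / m < m := hdiv i
    have hjm : (j : ℕ) % m < m := Nat.mod_lt _ hm0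
    have hk : (i : ℕ) / m * m + (j : ℕ) % m < m ^ 2 := by
      have h2 : m ^ 2 = m * m := sq m
      conv_rhs => rw [h2]
      nlinarith
    refine ⟨⟨(i : ℕ) / m * m + (j : ℕ) % m, hk⟩, ?_⟩
    simp only [Finset.mem_inter, Finset.mem_union, Finset.mem_filter, Finset.mem_univ, true_and]
    constructor
    · left
      show ((i : ℕ) / m * m + (j : ℕ) % m) / m = (i : ℕ) / m
      rw [mul_comm, Nat.mul_add_div hm0, Nat.div_eq_of_lt hjm]
      omega
    · right
      show ((i : ℕ) / m * m + (j : ℕ) % m) % m = (j : ℕ) % m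
      rw [Nat.add_comm, Nat.add_mul_mod_self_right, Nat.mod_mod_of_dvd _ dvd_rfl]
end

section
/- Let m ≥ 1 and f be natural numbers and let n = m²·(f+1). Then there exists a family (B_i)_{i ∈ Fin n} of finite subsets of Fin n such that card(B_i) ≤ 2·m·(f+1) (which equals 2·√(n(f+1))) for every i, and card(B_i ∩ B_j) ≥ f+1 for every pair of indices i, j. -/
open Finset

/-- Fixed clerk sets tolerating `f` dishonest nodes: for `n = m²·(f+1)` nodes there is a
family of clerk sets `B i ⊆ Fin n`, each of size at most `2·m·(f+1) = 2·√(n(f+1))`,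
such that any two of them intersect in at least `f+1` nodes. -/
theorem fixed_clerk_sets_with_faults (m f : ℕ) (hm : 1 ≤ m) (n : ℕ)
    (hn : n = m ^ 2 * (f + 1)) :
    ∃ B : Fin n → Finset (Fin n),
      (∀ i, (B i).card ≤ 2 * m * (f + 1)) ∧ ∀ i j, f + 1 ≤ (B i ∩ B j).card := by
  have hn' : m * (m * (f + 1)) = n := by rw [hn]; ring
  let e : Fin m × Fin m × Fin (f + 1) ≃ Fin n :=
    ((Equiv.prodCongr (Equiv.refl (Fin m)) finProdFinEquiv).trans finProdFinEquiv).trans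
      (finCongr hn')
  let S : Fin m × Fin m × Fin (f + 1) → Finset (Fin m × Fin m × Fin (f + 1)) :=
    fun p => ({p.1} ×ˢ (univ : Finset (Fin m)) ×ˢ (univ : Finset (Fin (f + 1)))) ∪
      ((univ : Finset (Fin m)) ×ˢ {p.2.1} ×ˢ (univ : Finset (Fin (f + 1))))
  refine ⟨fun i => (S (e.symm i)).map e.toEmbedding, ?_, ?_⟩
  · intro i
    rw [Finset.card_map]
    calc (S (e.symm i)).card
        ≤ ({(e.symm i).1} ×ˢ (univ : Finset (Fin m)) ×ˢ (univ : Finset (Fin (f + 1)))).card +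
          ((univ : Finset (Fin m)) ×ˢ {(e.symm i).2.1} ×ˢ
            (univ : Finset (Fin (f + 1)))).card := Finset.card_union_le _ _
      _ = 2 * m * (f + 1) := by
          simp [Finset.card_product]
          ring
  · intro i j
    rw [← Finset.map_inter]
    rw [Finset.card_map]
    have hsub : ({(e.symm i).1} ×ˢ {(e.symm j).2.1} ×ˢ (univ : Finset (Fin (f + 1)))) ⊆
        S (e.symm i) ∩ S (e.symm j) := by
      intro x hx
      simp only [Finset.mem_product, Finset.mem_singleton, Finset.mem_univ, and_true] at hx
      simp only [S, Finset.mem_inter, Finset.mem_union, Finset.mem_product,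
        Finset.mem_singleton, Finset.mem_univ, and_true, true_and]
      exact ⟨Or.inl hx.1, Or.inr hx.2⟩
    calc f + 1 = ({(e.symm i).1} ×ˢ {(e.symm j).2.1} ×ˢ
          (univ : Finset (Fin (f + 1)))).card := by simp [Finset.card_product]
      _ ≤ _ := Finset.card_le_card hsub
end

section
/- Let n and b be real numbers with b ≥ 1 and n − b + 1 > 0, let r ≥ 1 be a natural number, and assume n − r·(b−1) ≥ 0. Then ∏_{i=1}^{r} ((n − i·(b−1)) / (n − b + 1))^b ≤ ((n − ((r+1)/2)·(b−1)) / (n − b + 1))^(r·b). -/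
/-!
The terms `n - i(b-1)`, `i = 1, …, r`, form an arithmetic progression with mean
`n - ((r+1)/2)(b-1)`, so by AM-GM their product is at most that mean to the power `r`.
Dividing by `(n-b+1)^r` and raising to the power `b` gives the claim.
-/

open Finset

theorem Real.prod_le_sum_div_card_pow {ι : Type*} (s : Finset ι) (f : ι → ℝ)
    (hf : ∀ i ∈ s, 0 ≤ f i) :
    ∏ i ∈ s, f i ≤ ((∑ i ∈ s, f i) / #s) ^ #s := by
  rcases s.eq_empty_or_nonempty with rfl | hs
  · simp
  have hcard : (0 : ℝ) < #s := by exact_mod_cast hs.card_pos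
  have hgm : ∏ i ∈ s, f i ^ (#s : ℝ)⁻¹ ≤ (∑ i ∈ s, f i) / #s := by
    have := Real.geom_mean_le_arith_mean_weighted s (fun _ ↦ (#s : ℝ)⁻¹) f
      (fun _ _ ↦ by positivity) (by simp [hcard.ne']) hf
    rwa [← mul_sum, inv_mul_eq_div] at this
  have hprod : 0 ≤ ∏ i ∈ s, f i := prod_nonneg hf
  calc ∏ i ∈ s, f i
      = ((∏ i ∈ s, f i) ^ (#s : ℝ)⁻¹) ^ (#s : ℝ) := by
        rw [← Real.rpow_mul hprod, inv_mul_cancel₀ hcard.ne', Real.rpow_one]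
    _ ≤ ((∑ i ∈ s, f i) / #s) ^ (#s : ℝ) := by
        rw [← Real.finsetProd_rpow s f hf]
        exact Real.rpow_le_rpow (prod_nonneg fun i hi ↦ Real.rpow_nonneg (hf i hi) _) hgm
          hcard.le
    _ = ((∑ i ∈ s, f i) / #s) ^ #s := Real.rpow_natCast _ _

theorem sum_Icc_sub_mul (A a : ℝ) (r : ℕ) :
    ∑ i ∈ Icc 1 r, (A - i * a) = r * (A - (r + 1) / 2 * a) := by
  induction r with
  | zero => simp
  | succ k ih =>
    rw [sum_Icc_succ_top (by omega), ih]
    push_cast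
    ring

theorem prod_Icc_sub_mul_le_pow (A a : ℝ) (r : ℕ) (h : ∀ i ∈ Icc 1 r, 0 ≤ A - i * a) :
    ∏ i ∈ Icc 1 r, (A - i * a) ≤ (A - (r + 1) / 2 * a) ^ r := by
  refine (Real.prod_le_sum_div_card_pow _ _ h).trans_eq ?_
  rw [sum_Icc_sub_mul, Nat.card_Icc, Nat.add_sub_cancel]
  rcases r.eq_zero_or_pos with rfl | hr
  · simp
  · rw [mul_div_cancel_left₀ _ (by positivity)]

theorem prod_avoidance_le_pow_general (n b : ℝ) (hb : 1 ≤ b) (hnb : 0 < n - b + 1)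
    (r : ℕ) (h : 0 ≤ n - (r : ℝ) * (b - 1)) :
    ∏ i ∈ Finset.Icc 1 r, ((n - (i : ℝ) * (b - 1)) / (n - b + 1)) ^ b
      ≤ ((n - (((r : ℝ) + 1) / 2) * (b - 1)) / (n - b + 1)) ^ ((r : ℝ) * b) := by
  set D := n - b + 1
  have hnum : ∀ i ∈ Icc 1 r, 0 ≤ n - (i : ℝ) * (b - 1) := fun i hi ↦ by
    have : (i : ℝ) ≤ r := by exact_mod_cast (mem_Icc.mp hi).2
    nlinarith
  -- the mean of the progression is the midpoint of its terms at `i = 1` and `i = r`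
  have hmean : 0 ≤ n - ((r + 1) / 2) * (b - 1) := by linarith
  calc ∏ i ∈ Icc 1 r, ((n - i * (b - 1)) / D) ^ b
      = ((∏ i ∈ Icc 1 r, (n - i * (b - 1))) / D ^ r) ^ b := by
        rw [Real.finsetProd_rpow _ _ fun i hi ↦ div_nonneg (hnum i hi) hnb.le,
          prod_div_distrib, prod_const, Nat.card_Icc, Nat.add_sub_cancel]
    _ ≤ ((n - ((r + 1) / 2) * (b - 1)) ^ r / D ^ r) ^ b := by
        gcongr
        · exact div_nonneg (prod_nonneg hnum) (by positivity)
        · exact prod_Icc_sub_mul_le_pow n (b - 1) r hnum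
    _ = ((n - ((r + 1) / 2) * (b - 1)) / D) ^ ((r : ℝ) * b) := by
        rw [← div_pow, Real.rpow_natCast_mul (div_nonneg hmean hnb.le)]

/-- Bounding the product of the `r` avoidance probabilities by a single power:
`∏_{i=1}^{r} ((n - i(b-1))/(n-b+1))^b ≤ ((n - ((r+1)/2)(b-1))/(n-b+1))^(r·b)`. -/
theorem prod_avoidance_le_pow (n b : ℝ) (hb : 1 ≤ b) (hnb : 0 < n - b + 1)
    (r : ℕ) (hr : 1 ≤ r) (h : 0 ≤ n - (r : ℝ) * (b - 1)) :
    ∏ i ∈ Finset.Icc 1 r, ((n - (i : ℝ) * (b - 1)) / (n - b + 1)) ^ b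
      ≤ ((n - (((r : ℝ) + 1) / 2) * (b - 1)) / (n - b + 1)) ^ ((r : ℝ) * b) :=
  prod_avoidance_le_pow_general n b hb hnb r h
end

section
/- Let n, b, r be natural numbers with r ≥ 2, b ≥ 1, and (r+1)·b ≤ n, and let λ > 0 be a real number. If b ≥ √(2nλ)/(r−1) + 1, then ∏_{i=1}^{r} ( C(n − i·(b−1), b) / C(n, b) ) ≤ 2^(−λ), where C(·,·) denotes the binomial coefficient and the product is taken over real numbers. -/
open Finset

/-- Ratio of binomial coefficients bounded by an exponential. -/
lemma choose_ratio_le_exp (n k b : ℕ) (hkb : k + b ≤ n) :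
    ((n - k).choose b : ℝ) / (n.choose b : ℝ) ≤ Real.exp (-(k * b : ℝ) / n) := by
  have hbn : b ≤ n - k := by omega
  have hfac : (0 : ℝ) < (b.factorial : ℝ) := by positivity
  have hEq : ((n - k).choose b : ℝ) / (n.choose b : ℝ)
      = ((n - k).descFactorial b : ℝ) / (n.descFactorial b : ℝ) := by
    rw [Nat.descFactorial_eq_factorial_mul_choose, Nat.descFactorial_eq_factorial_mul_choose]
    push_cast
    rw [mul_div_mul_left _ _ (ne_of_gt hfac)]
  rw [hEq]
  have hprod1 : ((n - k).descFactorial b : ℝ) = ∏ j ∈ range b, ((n : ℝ) - k - j) := by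
    rw [Nat.descFactorial_eq_prod_range]
    push_cast
    refine Finset.prod_congr rfl fun j hj => ?_
    have hj' : j < b := Finset.mem_range.mp hj
    have h1 : k ≤ n := by omega
    have h2 : j ≤ n - k := by omega
    rw [Nat.cast_sub h2, Nat.cast_sub h1]
  have hprod2 : ((n).descFactorial b : ℝ) = ∏ j ∈ range b, ((n : ℝ) - j) := by
    rw [Nat.descFactorial_eq_prod_range]
    push_cast
    refine Finset.prod_congr rfl fun j hj => ?_
    have hj' : j < b := Finset.mem_range.mp hj
    rw [Nat.cast_sub (by omega)]
  rw [hprod1, hprod2, ← Finset.prod_div_distrib]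
  have hstep : ∀ j ∈ range b, ((n : ℝ) - k - j) / ((n : ℝ) - j) ≤ Real.exp (-(k : ℝ) / n) := by
    intro j hj
    have hj' : j < b := Finset.mem_range.mp hj
    have hden : (0 : ℝ) < (n : ℝ) - j := by
      have : j < n := by omega
      have := Nat.cast_lt (α := ℝ).mpr this
      linarith
    have hnpos : (0 : ℝ) < n := by
      have : 0 < n := by omega
      exact_mod_cast this
    have hnum : (0 : ℝ) ≤ (n : ℝ) - k - j := by
      have : (k + j : ℕ) < n := by omega
      have := Nat.cast_lt (α := ℝ).mpr this
      push_cast at this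
      linarith
    have hk0 : (0 : ℝ) ≤ (k : ℝ) := by positivity
    have h1 : ((n : ℝ) - k - j) / ((n : ℝ) - j) ≤ ((n : ℝ) - k) / n := by
      rw [div_le_div_iff₀ hden hnpos]
      nlinarith [mul_nonneg hk0 (Nat.cast_nonneg (α := ℝ) j)]
    have h2 : ((n : ℝ) - k) / n ≤ Real.exp (-(k : ℝ) / n) := by
      have := Real.add_one_le_exp (-(k : ℝ) / n)
      have hEq2 : ((n : ℝ) - k) / n = -(k : ℝ) / n + 1 := by
        field_simp
        ring
      rw [hEq2]
      exact this
    linarith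
  calc ∏ j ∈ range b, ((n : ℝ) - k - j) / ((n : ℝ) - j)
      ≤ ∏ j ∈ range b, Real.exp (-(k : ℝ) / n) := by
        refine Finset.prod_le_prod (fun j hj => ?_) hstep
        have hj' : j < b := Finset.mem_range.mp hj
        have hden : (0 : ℝ) < (n : ℝ) - j := by
          have : j < n := by omega
          have := Nat.cast_lt (α := ℝ).mpr this
          linarith
        have hnum : (0 : ℝ) ≤ (n : ℝ) - k - j := by
          have : (k + j : ℕ) < n := by omega
          have := Nat.cast_lt (α := ℝ).mpr this
          push_cast at this
          linarith
        positivity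
    _ = Real.exp (-(k * b : ℝ) / n) := by
        rw [Finset.prod_const, Finset.card_range, ← Real.exp_nat_mul]
        ring_nf


lemma sum_Icc_id_real (r : ℕ) : (∑ i ∈ Finset.Icc 1 r, ((i : ℝ))) = (r : ℝ) * (r + 1) / 2 := by
  induction r with
  | zero => simp
  | succ m ih =>
    rw [Finset.sum_Icc_succ_top (by omega)]
    rw [ih]
    push_cast
    ring

set_option maxHeartbeats 1000000 in
/-- Preventing `r`-fold double spending with only the double spender dishonest:
clerk sets of size `b ≥ √(2nλ)/(r-1) + 1` make the escape probability
`∏_{i=1}^{r} C(n - i(b-1), b)/C(n, b)` at most `2^(-λ)`. -/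
theorem multi_spend_no_faults_bound (n b r : ℕ) (hr : 2 ≤ r) (hb : 1 ≤ b)
    (hn : (r + 1) * b ≤ n) (lam : ℝ) (hlam : 0 < lam)
    (hbsize : (b : ℝ) ≥ Real.sqrt (2 * n * lam) / ((r : ℝ) - 1) + 1) :
    ∏ i ∈ Finset.Icc 1 r, (((n - i * (b - 1)).choose b : ℝ) / (n.choose b : ℝ))
      ≤ (2 : ℝ) ^ (-lam) := by
  have hnpos : 0 < n :=
    lt_of_lt_of_le (Nat.mul_pos (by omega) hb) hn
  have hstep : ∀ i ∈ Finset.Icc 1 r,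
      (((n - i * (b - 1)).choose b : ℝ) / (n.choose b : ℝ))
        ≤ Real.exp (-((i * (b - 1) : ℕ) * b : ℝ) / n) := by
    intro i hi
    have hi' : i ≤ r := (Finset.mem_Icc.mp hi).2
    apply choose_ratio_le_exp
    have : i * (b - 1) ≤ r * (b - 1) := Nat.mul_le_mul_right _ hi'
    have : r * (b - 1) + b ≤ (r + 1) * b := by
      have : r * (b - 1) ≤ r * b := Nat.mul_le_mul_left _ (Nat.sub_le _ _)
      nlinarith
    omega
  have h1 : ∏ i ∈ Finset.Icc 1 r, (((n - i * (b - 1)).choose b : ℝ) / (n.choose b : ℝ))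
      ≤ ∏ i ∈ Finset.Icc 1 r, Real.exp (-((i * (b - 1) : ℕ) * b : ℝ) / n) := by
    refine Finset.prod_le_prod (fun i hi => by positivity) hstep
  have h2 : ∏ i ∈ Finset.Icc 1 r, Real.exp (-((i * (b - 1) : ℕ) * b : ℝ) / n)
      = Real.exp (∑ i ∈ Finset.Icc 1 r, (-((i * (b - 1) : ℕ) * b : ℝ) / n)) := by
    rw [Real.exp_sum]
  have hsum : (∑ i ∈ Finset.Icc 1 r, ((i : ℝ))) = (r : ℝ) * (r + 1) / 2 :=
    sum_Icc_id_real r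
  have hb1 : ((b - 1 : ℕ) : ℝ) = (b : ℝ) - 1 := by
    rw [Nat.cast_sub hb]; simp
  have h3 : (∑ i ∈ Finset.Icc 1 r, (-((i * (b - 1) : ℕ) * b : ℝ) / n))
      = -(((b : ℝ) - 1) * b) * ((r : ℝ) * (r + 1) / 2) / n := by
    have hcong : ∀ i ∈ Finset.Icc 1 r,
        (-((i * (b - 1) : ℕ) * b : ℝ) / n) = (-(((b : ℝ) - 1) * b) / n) * i := by
      intro i hi
      push_cast [hb1]
      ring
    rw [Finset.sum_congr rfl hcong, ← Finset.mul_sum, hsum]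
    ring
  rw [h2, h3] at h1
  refine h1.trans ?_
  rw [show (2 : ℝ) ^ (-lam) = Real.exp (Real.log 2 * (-lam)) from
    (Real.rpow_def_of_pos (by norm_num) _)]
  rw [Real.exp_le_exp]
  have hlog2 : Real.log 2 ≤ 1 := by
    have := Real.log_le_sub_one_of_pos (by norm_num : (0:ℝ) < 2)
    linarith
  have hlog2pos : 0 < Real.log 2 := Real.log_pos (by norm_num)
  have hrR : (2 : ℝ) ≤ (r : ℝ) := by exact_mod_cast hr
  have hr1 : (0 : ℝ) < (r : ℝ) - 1 := by linarith
  have hnR : (0 : ℝ) < (n : ℝ) := by exact_mod_cast hnpos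
  have hbR : (1 : ℝ) ≤ (b : ℝ) := by exact_mod_cast hb
  have hsqrt : Real.sqrt (2 * n * lam) ≤ ((b : ℝ) - 1) * ((r : ℝ) - 1) := by
    have h' : Real.sqrt (2 * n * lam) / ((r : ℝ) - 1) ≤ (b : ℝ) - 1 := by linarith
    calc Real.sqrt (2 * n * lam)
        = Real.sqrt (2 * n * lam) / ((r : ℝ) - 1) * ((r : ℝ) - 1) := by
          field_simp
      _ ≤ ((b : ℝ) - 1) * ((r : ℝ) - 1) :=
          mul_le_mul_of_nonneg_right h' (le_of_lt hr1)
  have hsq : 2 * (n : ℝ) * lam ≤ (((b : ℝ) - 1) * ((r : ℝ) - 1)) ^ 2 := by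
    have h2nl : (0 : ℝ) ≤ 2 * n * lam := by positivity
    nlinarith [Real.sq_sqrt h2nl, Real.sqrt_nonneg (2 * (n : ℝ) * lam)]
  have e1 : ((b : ℝ) - 1) ^ 2 ≤ ((b : ℝ) - 1) * b := by nlinarith
  have e2 : ((r : ℝ) - 1) ^ 2 ≤ (r : ℝ) * (r + 1) := by nlinarith
  have hA : (((b : ℝ) - 1) * ((r : ℝ) - 1)) ^ 2 ≤ (((b : ℝ) - 1) * b) * ((r : ℝ) * (r + 1)) := by
    have := mul_le_mul e1 e2 (sq_nonneg ((r : ℝ) - 1)) (by nlinarith : (0:ℝ) ≤ ((b:ℝ)-1) * b)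
    nlinarith [this]
  have k1 : 2 * (n : ℝ) * lam * Real.log 2 ≤ 2 * (n : ℝ) * lam := by
    nlinarith [mul_nonneg hnR.le hlam.le]
  have key := k1.trans (hsq.trans hA)
  rw [div_le_iff₀ hnR]
  linarith [key]
end

section
/- Let n, f, λ, b be real numbers with n > 0, 0 ≤ f < n, λ > 0, set c = 1 − f/n, and let r ≥ 1 be a natural number. If 0 ≤ b, c·b ≤ n, and b ≥ √(n·λ / ((log₂ e)·c·r)), then ( ((n − c·b)/n)^b )^r ≤ 2^(−λ). -/
/-- Preventing `r`-fold double spending with `f` dishonest nodes: with `c = 1 - f/n`,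
clerk sets of size `b ≥ √(nλ / (log₂ e · c · r))` make the escape probability
`(((n - c·b)/n)^b)^r` at most `2^(-λ)`. -/
theorem multi_spend_with_faults_bound (n f lam b c : ℝ) (hn : 0 < n) (hf0 : 0 ≤ f)
    (hfn : f < n) (hlam : 0 < lam) (hc : c = 1 - f / n)
    (r : ℕ) (hr : 1 ≤ r) (hb0 : 0 ≤ b) (hcb : c * b ≤ n)
    (hb : b ≥ Real.sqrt (n * lam / (Real.logb 2 (Real.exp 1) * c * (r : ℝ)))) :
    (((n - c * b) / n) ^ b) ^ r ≤ (2 : ℝ) ^ (-lam) := by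
  have hcpos : 0 < c := by
    rw [hc]
    have : f / n < 1 := (div_lt_one hn).mpr hfn
    linarith
  have hrpos : (0 : ℝ) < (r : ℝ) := by exact_mod_cast hr
  have hlog2 : (0 : ℝ) < Real.log 2 := Real.log_pos (by norm_num)
  have hlogb : Real.logb 2 (Real.exp 1) = 1 / Real.log 2 := by
    rw [Real.logb, Real.log_exp]
  have harg : n * lam / (Real.logb 2 (Real.exp 1) * c * (r : ℝ))
      = n * lam * Real.log 2 / (c * (r : ℝ)) := by
    rw [hlogb]; field_simp
  have hargpos : 0 ≤ n * lam * Real.log 2 / (c * (r : ℝ)) := by positivity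
  have hb2 : n * lam * Real.log 2 / (c * (r : ℝ)) ≤ b ^ 2 := by
    have h := hb
    rw [harg] at h
    calc n * lam * Real.log 2 / (c * (r : ℝ))
        = Real.sqrt (n * lam * Real.log 2 / (c * (r : ℝ))) ^ 2 := by
          rw [Real.sq_sqrt hargpos]
      _ ≤ b ^ 2 := by
          apply pow_le_pow_left₀ (Real.sqrt_nonneg _) h
  have hkey : lam * Real.log 2 ≤ (r : ℝ) * (c * b / n * b) := by
    rw [div_le_iff₀ (by positivity)] at hb2
    have h' : (r : ℝ) * (c * b / n * b) = (r : ℝ) * (c * b * b) / n := by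
      field_simp
    rw [h', le_div_iff₀ hn]
    nlinarith
  have hbase0 : 0 ≤ (n - c * b) / n := by
    apply div_nonneg (by linarith) hn.le
  have h1 : (n - c * b) / n ≤ Real.exp (-(c * b / n)) := by
    have := Real.add_one_le_exp (-(c * b / n))
    have heq : (n - c * b) / n = -(c * b / n) + 1 := by field_simp; ring
    rw [heq]; exact this
  have h2 : ((n - c * b) / n) ^ b ≤ Real.exp (-(c * b / n)) ^ b :=
    Real.rpow_le_rpow hbase0 h1 hb0
  have h3 : Real.exp (-(c * b / n)) ^ b = Real.exp (-(c * b / n) * b) :=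
    (Real.exp_mul _ _).symm
  have h4 : (((n - c * b) / n) ^ b) ^ r ≤ Real.exp (-(c * b / n) * b) ^ r := by
    rw [← h3]
    exact pow_le_pow_left₀ (Real.rpow_nonneg hbase0 b) h2 r
  have h5 : Real.exp (-(c * b / n) * b) ^ r = Real.exp ((r : ℝ) * (-(c * b / n) * b)) :=
    (Real.exp_nat_mul _ r).symm
  have h6 : (2 : ℝ) ^ (-lam) = Real.exp (-(lam * Real.log 2)) := by
    rw [Real.rpow_def_of_pos (by norm_num : (0:ℝ) < 2)]
    ring_nf
  rw [h6]
  refine h4.trans ?_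
  rw [h5]
  apply Real.exp_le_exp.mpr
  nlinarith [hkey]
end

section
/- Let β, b, λ be real numbers with β > 0, 0 ≤ b ≤ β, λ ≥ 0, and let r ≥ 1 be a natural number. If b ≥ (β / (r·(log₂ e))) · (λ + 1 + log₂(r+2)), then (r+2)·(1 − b/β)^r ≤ 2^(−(λ+1)), where log₂ denotes the base-2 logarithm (so log₂ e = 1/ln 2). -/
/-- Coin-specific clerk sets, `r`-fold double spending: clerk sets of size
`b ≥ (β/(r·log₂ e))·(λ + 1 + log₂(r+2))` make `(r+2)·(1 - b/β)^r ≤ 2^(-(λ+1))`. -/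
theorem coin_specific_multi_spend_bound (β b lam : ℝ) (hβ : 0 < β) (hb0 : 0 ≤ b)
    (hbβ : b ≤ β) (hlam : 0 ≤ lam) (r : ℕ) (hr : 1 ≤ r)
    (hb : b ≥ (β / ((r : ℝ) * Real.logb 2 (Real.exp 1)))
        * (lam + 1 + Real.logb 2 ((r : ℝ) + 2))) :
    ((r : ℝ) + 2) * (1 - b / β) ^ r ≤ (2 : ℝ) ^ (-(lam + 1)) := by
  have hlog2 : (0:ℝ) < Real.log 2 := Real.log_pos (by norm_num)
  have hr0 : (0:ℝ) < (r:ℝ) := by exact_mod_cast hr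
  have hlogb : Real.logb 2 (Real.exp 1) = 1 / Real.log 2 := by
    simp [Real.logb]
  set c : ℝ := lam + 1 + Real.logb 2 ((r : ℝ) + 2) with hc
  have hc0 : 0 ≤ c := by
    have : 0 ≤ Real.logb 2 ((r : ℝ) + 2) :=
      Real.logb_nonneg (by norm_num) (by linarith)
    positivity
  have hb' : (r:ℝ) * (b / β) ≥ Real.log 2 * c := by
    have : b ≥ β * Real.log 2 / r * c := by
      rw [hlogb] at hb
      field_simp at hb ⊢
      linarith [hb]
    have h1 : β * Real.log 2 / r * c * r ≤ b * r :=
      mul_le_mul_of_nonneg_right this hr0.le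
    have h2 : β * Real.log 2 / r * c * r = β * (Real.log 2 * c) := by
      field_simp
    rw [ge_iff_le, mul_div_assoc', le_div_iff₀ hβ]
    ring_nf at h1 h2 ⊢
    linarith
  have hx0 : 0 ≤ 1 - b / β := by
    have : b / β ≤ 1 := (div_le_one hβ).2 hbβ
    linarith
  have h1 : (1 - b / β) ^ r ≤ Real.exp (-((r:ℝ) * (b / β))) := by
    have hle : 1 - b / β ≤ Real.exp (-(b / β)) := by
      have := Real.add_one_le_exp (-(b / β)); linarith
    calc (1 - b / β) ^ r ≤ (Real.exp (-(b/β))) ^ r :=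
          pow_le_pow_left₀ hx0 hle r
      _ = Real.exp (-((r:ℝ) * (b / β))) := by
          rw [← Real.exp_nat_mul]; ring_nf
  have h2 : Real.exp (-((r:ℝ) * (b / β))) ≤ Real.exp (-(Real.log 2 * c)) :=
    Real.exp_le_exp.2 (by linarith)
  have h3 : Real.exp (-(Real.log 2 * c)) = (2:ℝ) ^ (-c) := by
    rw [Real.rpow_def_of_pos (by norm_num : (0:ℝ) < 2)]
    ring_nf
  have h4 : ((r:ℝ) + 2) * (2:ℝ) ^ (-c) = (2:ℝ) ^ (-(lam + 1)) := by
    have hrlog : (2:ℝ) ^ (Real.logb 2 ((r:ℝ) + 2)) = (r:ℝ) + 2 :=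
      Real.rpow_logb (by norm_num) (by norm_num) (by linarith)
    rw [hc, show -(lam + 1 + Real.logb 2 ((r:ℝ)+2)) =
      -(lam+1) + -(Real.logb 2 ((r:ℝ)+2)) by ring,
      Real.rpow_add (by norm_num), Real.rpow_neg (by norm_num) (Real.logb 2 ((r:ℝ)+2)),
      hrlog]
    field_simp
  calc ((r:ℝ) + 2) * (1 - b / β) ^ r
      ≤ ((r:ℝ) + 2) * (2:ℝ) ^ (-c) := by
        apply mul_le_mul_of_nonneg_left _ (by positivity)
        rw [← h3]; exact h1.trans h2
    _ = (2:ℝ) ^ (-(lam + 1)) := h4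
end

section
/- Let d < f < n be natural numbers, let λ ≥ 0, β, b be real numbers with β > 0 and 0 ≤ b ≤ β, and let r ≥ 1 be a natural number. If β > d + (λ+1) / log₂((n−d)/(f−d)) and b ≥ (β / (r·(log₂ e))) · (λ + 1 + log₂(r+2)), then ((f−d)/(n−d))^(β−d) + (r+2)·(1 − b/β)^r ≤ 2^(−λ), where log₂ denotes the base-2 logarithm (so log₂ e = 1/ln 2). -/
/-- Combined bound for coin-specific clerk sets: the probability that the clerk space is
all dishonest plus the probability that an honest clerk is in at most one of the `r+1`
random clerk sets is at most `2^(-λ)`. -/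
theorem coin_specific_combined_bound (d f n : ℕ) (hdf : d < f) (hfn : f < n)
    (lam β b : ℝ) (hlam : 0 ≤ lam) (hβ0 : 0 < β) (hb0 : 0 ≤ b) (hbβ : b ≤ β)
    (r : ℕ) (hr : 1 ≤ r)
    (hβ : β > (d : ℝ) + (lam + 1) /
        Real.logb 2 (((n : ℝ) - (d : ℝ)) / ((f : ℝ) - (d : ℝ))))
    (hb : b ≥ (β / ((r : ℝ) * Real.logb 2 (Real.exp 1)))
        * (lam + 1 + Real.logb 2 ((r : ℝ) + 2))) :
    (((f : ℝ) - (d : ℝ)) / ((n : ℝ) - (d : ℝ))) ^ (β - (d : ℝ))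
      + ((r : ℝ) + 2) * (1 - b / β) ^ r ≤ (2 : ℝ) ^ (-lam) := by
  have hfd : (0:ℝ) < (f:ℝ) - d := sub_pos.2 (by exact_mod_cast hdf)
  have hnd : (0:ℝ) < (n:ℝ) - d := sub_pos.2 (by exact_mod_cast hdf.trans hfn)
  have hfn' : (f:ℝ) - d < (n:ℝ) - d := by
    have : (f:ℝ) < n := by exact_mod_cast hfn
    linarith
  set q : ℝ := ((f:ℝ)-d)/((n:ℝ)-d) with hqdef
  have hq0 : 0 < q := div_pos hfd hnd
  have hq1 : q < 1 := (div_lt_one hnd).2 hfn'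
  set L : ℝ := Real.logb 2 (((n:ℝ)-d)/((f:ℝ)-d)) with hLdef
  have hL : 0 < L := Real.logb_pos one_lt_two ((one_lt_div hfd).2 hfn')
  have hLq : Real.logb 2 q = -L := by
    rw [hLdef, hqdef, ← Real.logb_inv]
    congr 1
    field_simp
  -- Part 1
  have h1exp : lam + 1 < (β - d) * L := by
    have hβd : (lam + 1) / L < β - d := by linarith
    exact (div_lt_iff₀ hL).1 hβd
  have h1 : q ^ (β - (d:ℝ)) ≤ (2:ℝ) ^ (-(lam+1)) := by
    have hq2 : q ^ (β - (d:ℝ)) = (2:ℝ) ^ (Real.logb 2 q * (β - d)) := by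
      rw [Real.rpow_mul (by norm_num), Real.rpow_logb two_pos (by norm_num) hq0]
    rw [hq2]
    apply Real.rpow_le_rpow_left_iff (x := 2) one_lt_two |>.2
    rw [hLq]
    nlinarith
  -- Part 2
  set x : ℝ := b / β with hxdef
  have hx0 : 0 ≤ x := div_nonneg hb0 hβ0.le
  have hx1 : x ≤ 1 := (div_le_one hβ0).2 hbβ
  have hrpos : (0:ℝ) < r := by exact_mod_cast hr
  have hlogbe : Real.logb 2 (Real.exp 1) = 1 / Real.log 2 := by
    rw [Real.logb, Real.log_exp]
  set C : ℝ := lam + 1 + Real.logb 2 ((r:ℝ) + 2) with hCdef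
  have hr2pos : (0:ℝ) < (r:ℝ) + 2 := by positivity
  have hlogr2 : 0 < Real.logb 2 ((r:ℝ) + 2) := Real.logb_pos one_lt_two (by linarith)
  have hCpos : 0 < C := by positivity
  have hlog2 : 0 < Real.log 2 := Real.log_pos one_lt_two
  have hxr : Real.log 2 * C ≤ (r:ℝ) * x := by
    have hb' : b ≥ (β * Real.log 2 / r) * C := by
      have : β / ((r:ℝ) * Real.logb 2 (Real.exp 1)) = β * Real.log 2 / r := by
        rw [hlogbe]; field_simp
      rw [this] at hb; exact hb
    rw [hxdef]
    rw [ge_iff_le, div_mul_eq_mul_div, div_le_iff₀ hrpos] at hb'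
    rw [← mul_div_assoc, le_div_iff₀ hβ0]
    nlinarith
  have h2 : ((r:ℝ) + 2) * (1 - x) ^ r ≤ (2:ℝ) ^ (-(lam+1)) := by
    have hexp : (1 - x) ^ r ≤ Real.exp (-((r:ℝ) * x)) := by
      have h := Real.add_one_le_exp (-x)
      calc (1 - x) ^ r ≤ (Real.exp (-x)) ^ r :=
            pow_le_pow_left₀ (by linarith) (by linarith) r
        _ = Real.exp ((r:ℝ) * (-x)) := (Real.exp_nat_mul _ r).symm
        _ = Real.exp (-((r:ℝ) * x)) := by ring_nf
    have hmono : Real.exp (-((r:ℝ) * x)) ≤ Real.exp (-(Real.log 2 * C)) :=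
      Real.exp_le_exp.2 (by linarith)
    have h2c : Real.exp (-(Real.log 2 * C)) = (2:ℝ) ^ (-C) := by
      rw [Real.rpow_def_of_pos two_pos]; ring_nf
    have hsplit : (2:ℝ) ^ (-C) = (2:ℝ) ^ (-(lam+1)) * ((r:ℝ) + 2)⁻¹ := by
      rw [show -C = -(lam+1) + -(Real.logb 2 ((r:ℝ)+2)) by rw [hCdef]; ring,
        Real.rpow_add two_pos]
      congr 1
      rw [Real.rpow_neg (by norm_num : (0:ℝ) ≤ 2),
        Real.rpow_logb two_pos (by norm_num) hr2pos]
    calc ((r:ℝ) + 2) * (1 - x) ^ r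
        ≤ ((r:ℝ) + 2) * ((2:ℝ) ^ (-(lam+1)) * ((r:ℝ) + 2)⁻¹) := by
          apply mul_le_mul_of_nonneg_left _ hr2pos.le
          rw [← hsplit, ← h2c]
          exact hexp.trans hmono
      _ = (2:ℝ) ^ (-(lam+1)) := by field_simp
  have hsum : (2:ℝ) ^ (-(lam+1)) + (2:ℝ) ^ (-(lam+1)) = (2:ℝ) ^ (-lam) := by
    rw [← two_mul, show -lam = 1 + (-(lam+1)) by ring, Real.rpow_add two_pos,
      Real.rpow_one]
  linarith [h1, h2]
end
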